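/- For |I| ≥ 2, the unique minimal simplicial complex generating Card_{≤1} ⊆ {0,1}^I (sequences with at most one occurrence of 1) is the complete graph on I: a complex generates Card_{≤1} if and only if it contains every 2-element subset of I. -/

import Mathlib

/-- `W` determines output coordinate `i` of `f`: the value `f x i` only
depends on the restriction of `x` to `W`. -/
def Determines {B J A I : Type*} (f : (J → B) → (I → A)) (i : I) (W : Set J) : Prop :=
  ∀ x y : J → B, (∀ j ∈ W, x j = y j) → f x i = f y i

/-- The input window of output coordinate `i`: the intersection of all
determining sets (which, for finite data, is the smallest determining set). -/
def window {B J A I : Type*} (f : (J → B) → (I → A)) (i : I) : Set J :=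
  ⋂₀ {W : Set J | Determines f i W}

/-- The dual window of an input coordinate `j`. -/
def dualWindow {B J A I : Type*} (f : (J → B) → (I → A)) (j : J) : Set I :=
  {i : I | j ∈ window f i}

/-- The communication complex of `f`: `S ∈ K_f` iff `⋂_{i ∈ S} W_f(i) ≠ ∅`
(the empty intersection being all of `J`). -/
def commComplex {B J A I : Type*} (f : (J → B) → (I → A)) : Set (Set I) :=
  {S : Set I | (⋂ i ∈ S, window f i).Nonempty}

/-- A complex `K` over `I` generates the language `L ⊆ A^I` if some function
`f : B^J → A^I` (with `B, J` finite, `J` nonempty) has image `L` and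
communication complex contained in `K`. -/
def Generates {A I : Type*} (K : Set (Set I)) (L : Set (I → A)) : Prop :=
  ∃ (B J : Type) (_ : Finite B) (_ : Finite J) (_ : Nonempty J)
    (f : (J → B) → (I → A)), Set.range f = L ∧ commComplex f ⊆ K

/-- A complex is connected if no nontrivial partition of the vertex set splits
all of its simplices. -/
def ConnectedComplex {I : Type*} (K : Set (Set I)) : Prop :=
  ¬ ∃ I0 : Set I, I0 ≠ ∅ ∧ I0 ≠ Set.univ ∧ ∀ S ∈ K, S ⊆ I0 ∨ S ⊆ I0ᶜ

/-- A simplicial complex: a downward closed collection of subsets. -/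
def IsComplex {I : Type*} (K : Set (Set I)) : Prop :=
  ∀ S ∈ K, ∀ T ⊆ S, T ∈ K

/-- The 1-skeleton of a complex, as a simple graph. -/
def skeletonGraph {I : Type*} (K : Set (Set I)) : SimpleGraph I :=
  SimpleGraph.fromRel (fun i j => ({i, j} : Set I) ∈ K)

/-- The complex associated to a graph: the empty set, the singletons, and the
edges. -/
def treeComplex {I : Type*} (G : SimpleGraph I) : Set (Set I) :=
  {S | S = ∅ ∨ (∃ i, S = {i}) ∨ ∃ i j, G.Adj i j ∧ S = ({i, j} : Set I)}

/-- The maximal simplices of a complex. -/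
def maxSimplices {I : Type*} (K : Set (Set I)) : Set (Set I) :=
  {S | S ∈ K ∧ ∀ T ∈ K, S ⊆ T → S = T}

/-- The image `f_*(K)` of a complex `K` on the input coordinates of `f`:
generated by the unions of dual windows over simplices of `K`. -/
def pushComplex {B J A I : Type*} (f : (J → B) → (I → A)) (K : Set (Set J)) : Set (Set I) :=
  {T : Set I | ∃ S ∈ K, T ⊆ ⋃ j ∈ S, dualWindow f j}

/-!
A coordinate `f · i` depends only on its window, so if the windows of `i ≠ j` were disjoint,
gluing a preimage of the indicator of `i` (on the window of `i`) with a preimage of the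
indicator of `j` (elsewhere) would produce an output with two ones. Conversely, give every
ordered pair `(i, j)` with `i ≠ j` a bit, and let output `i` be one iff all bits on pairs
`(i, ·)` are one and all bits on pairs `(·, i)` are zero: the pair `(i, j)` keeps `i` and `j`
from both being one, and output `i` reads only bits on pairs through `i`, so every simplex of
the communication complex lies inside an edge.
-/

open Set

section Window

variable {B J A I : Type*} {f : (J → B) → (I → A)} {i : I}

lemma determines_univ (f : (J → B) → (I → A)) (i : I) : Determines f i univ :=
  fun _ _ h => congrArg (f · i) (funext fun j => h j trivial)

lemma Determines.inter {W₁ W₂ : Set J} (h₁ : Determines f i W₁) (h₂ : Determines f i W₂) :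
    Determines f i (W₁ ∩ W₂) := by
  classical
  intro x y hxy
  calc f x i = f (W₁.piecewise x y) i :=
        h₁ _ _ fun j hj => (piecewise_eq_of_mem _ _ _ hj).symm
    _ = f y i := h₂ _ _ fun j hj => by
        by_cases hj₁ : j ∈ W₁
        · rw [piecewise_eq_of_mem _ _ _ hj₁, hxy j ⟨hj₁, hj⟩]
        · rw [piecewise_eq_of_notMem _ _ _ hj₁]

lemma determines_sInter {F : Set (Set J)} (hF : F.Finite) (h : ∀ W ∈ F, Determines f i W) :
    Determines f i (⋂₀ F) := by
  induction F, hF using Set.Finite.induction_on with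
  | empty => simpa using determines_univ f i
  | @insert W F _ _ ih =>
    rw [sInter_insert]
    exact (h W (mem_insert _ _)).inter (ih fun V hV => h V (mem_insert_of_mem _ hV))

lemma determines_window [Finite J] (f : (J → B) → (I → A)) (i : I) :
    Determines f i (window f i) :=
  determines_sInter (toFinite _) fun _ hW => hW

lemma window_subset_of_determines {W : Set J} (hW : Determines f i W) : window f i ⊆ W :=
  sInter_subset_of_mem hW

lemma exists_apply_eq_apply_of_disjoint_window [Finite J] {j : I}
    (hij : Disjoint (window f i) (window f j)) (x y : J → B) :
    ∃ z, f z i = f x i ∧ f z j = f y j := by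
  classical
  refine ⟨(window f i).piecewise x y, determines_window f i _ _ fun k hk => ?_,
    determines_window f j _ _ fun k hk => ?_⟩
  · exact piecewise_eq_of_mem _ _ _ hk
  · exact piecewise_eq_of_notMem _ _ _ (hij.notMem_of_mem_right hk)

end Window

def atMostOneTrue (I : Type*) : Set (I → Bool) := {x | {i | x i = true}.ncard ≤ 1}

lemma mem_atMostOneTrue_iff {I : Type*} [Finite I] {x : I → Bool} :
    x ∈ atMostOneTrue I ↔ ∀ i, x i = true → ∀ j, x j = true → i = j :=
  ncard_le_one (toFinite _)

lemma window_inter_nonempty_of_range_eq_atMostOneTrue {B J I : Type*} [Finite J] [Finite I]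
    {f : (J → B) → (I → Bool)} (hf : range f = atMostOneTrue I) {i j : I} (hij : i ≠ j) :
    (window f i ∩ window f j).Nonempty := by
  classical
  have indicator_mem (k : I) : (fun l => decide (l = k)) ∈ range f := by
    rw [hf, mem_atMostOneTrue_iff]
    simp_all
  obtain ⟨x, hx⟩ := indicator_mem i
  obtain ⟨y, hy⟩ := indicator_mem j
  rw [← not_disjoint_iff_nonempty_inter]
  intro hdisj
  obtain ⟨z, hzi, hzj⟩ := exists_apply_eq_apply_of_disjoint_window hdisj x y
  have hz : f z ∈ atMostOneTrue I := hf ▸ mem_range_self z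
  exact hij (mem_atMostOneTrue_iff.mp hz i (by simp [hzi, hx]) j (by simp [hzj, hy]))

lemma pair_mem_commComplex_of_range_eq_atMostOneTrue {B J I : Type*} [Finite J] [Finite I]
    {f : (J → B) → (I → Bool)} (hf : range f = atMostOneTrue I) {i j : I} (hij : i ≠ j) :
    {i, j} ∈ commComplex f := by
  show (⋂ k ∈ ({i, j} : Set I), window f k).Nonempty
  rw [biInter_pair]
  exact window_inter_nonempty_of_range_eq_atMostOneTrue hf hij

section PairCode

variable (I : Type*)

open Classical in
noncomputable def pairCode (x : {p : I × I // p.1 ≠ p.2} → Bool) (i : I) : Bool :=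
  decide (∀ j (h : i ≠ j), x ⟨(i, j), h⟩ = true ∧ x ⟨(j, i), h.symm⟩ = false)

variable {I}

lemma pairCode_eq_true_iff (x : {p : I × I // p.1 ≠ p.2} → Bool) (i : I) :
    pairCode I x i = true ↔ ∀ j (h : i ≠ j), x ⟨(i, j), h⟩ = true ∧ x ⟨(j, i), h.symm⟩ = false := by
  simp [pairCode]

lemma range_pairCode [Finite I] [Nontrivial I] : range (pairCode I) = atMostOneTrue I := by
  ext g
  constructor
  · rintro ⟨x, rfl⟩
    refine mem_atMostOneTrue_iff.mpr fun i hi j hj => by_contra fun hij => ?_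
    have h₁ := ((pairCode_eq_true_iff x i).mp hi j hij).1
    have h₂ := ((pairCode_eq_true_iff x j).mp hj i (Ne.symm hij)).2
    simp [h₁] at h₂
  · intro hg
    refine ⟨fun p => g p.1.1, funext fun i => ?_⟩
    cases hgi : g i
    · obtain ⟨j, hj⟩ := exists_ne i
      rw [← Bool.not_eq_true, pairCode_eq_true_iff]
      exact fun h => by simpa [hgi] using (h j hj.symm).1
    · rw [pairCode_eq_true_iff]
      exact fun j hij => ⟨hgi, Bool.eq_false_iff.mpr fun hgj =>
        hij (mem_atMostOneTrue_iff.mp hg i hgi j hgj)⟩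

lemma window_pairCode_subset (i : I) :
    window (pairCode I) i ⊆ {p | p.1.1 = i ∨ p.1.2 = i} := by
  refine window_subset_of_determines fun x y hxy => ?_
  simp only [pairCode, decide_eq_decide]
  exact forall₂_congr fun j h => by
    rw [hxy ⟨(i, j), h⟩ (Or.inl rfl), hxy ⟨(j, i), h.symm⟩ (Or.inr rfl)]

lemma commComplex_pairCode_subset {K : Set (Set I)} (hK : IsComplex K)
    (hpairs : ∀ i j : I, i ≠ j → ({i, j} : Set I) ∈ K) :
    commComplex (pairCode I) ⊆ K := by
  rintro S ⟨p, hp⟩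
  refine hK _ (hpairs _ _ p.2) S fun i hi => ?_
  exact (window_pairCode_subset i (mem_iInter₂.mp hp i hi)).imp Eq.symm Eq.symm

end PairCode

/-- a complex generates `Card_{≤1}` (at most one occurrence of
`1`, with `|I| ≥ 2`) iff it contains every 2-element subset of `I`;
i.e., the complete graph is the unique minimal generating complex. -/
theorem stmt18 {I : Type} [Finite I] (hI : 2 ≤ Nat.card I)
    (K : Set (Set I)) (hK : IsComplex K) :
    Generates K {x : I → Bool | {i | x i = true}.ncard ≤ 1} ↔
      ∀ i j : I, i ≠ j → ({i, j} : Set I) ∈ K := by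
  change Generates K (atMostOneTrue I) ↔ _
  constructor
  · rintro ⟨B, J, _, _, _, f, hf, hfK⟩ i j hij
    exact hfK (pair_mem_commComplex_of_range_eq_atMostOneTrue hf hij)
  · intro hpairs
    have : Nontrivial I := Finite.one_lt_card_iff_nontrivial.mp hI
    obtain ⟨i, j, hij⟩ := exists_pair_ne I
    exact ⟨Bool, {p : I × I // p.1 ≠ p.2}, inferInstance, inferInstance, ⟨⟨(i, j), hij⟩⟩,
      pairCode I, range_pairCode, commComplex_pairCode_subset hK hpairs⟩
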